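/- arXiv:2008.01428 — 2 statements merged into one kernel-verified Lean document; each statement's English description precedes it below -/
import Mathlib

section
/- Let e > 2 and let a, d be coprime nonnegative integers with e ≤ a, and let H be the numerical semigroup generated by the arithmetic sequence a, a+d, a+2d, …, a+(e−1)d. Then H is symmetric if and only if a ≡ 2 (mod e−1). -/
namespace NumSgp

/-- A numerical semigroup: an additive submonoid of ℕ with finite complement. -/
def IsNumSgp (H : Set ℕ) : Prop :=
  0 ∈ H ∧ (∀ a ∈ H, ∀ b ∈ H, a + b ∈ H) ∧ Hᶜ.Finite

/-- Membership of an integer in (the image in ℤ of) `H ⊆ ℕ`. -/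
def memZ (H : Set ℕ) (z : ℤ) : Prop := ∃ n ∈ H, (n : ℤ) = z

/-- The Frobenius number: the largest integer not in `H`. -/
noncomputable def frob (H : Set ℕ) : ℤ := sSup {z : ℤ | ¬ memZ H z}

/-- The pseudo-Frobenius numbers of `H`. -/
def pseudoFrob (H : Set ℕ) : Set ℤ :=
  {f : ℤ | ¬ memZ H f ∧ ∀ m ∈ H, m ≠ 0 → memZ H (f + (m : ℤ))}

/-- The canonical ideal `Ω_H = {-f + h : f ∈ PF(H), h ∈ H}`. -/
def canIdeal (H : Set ℕ) : Set ℤ :=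
  {z : ℤ | ∃ f ∈ pseudoFrob H, ∃ h ∈ H, z = -f + (h : ℤ)}

/-- The anti-canonical ideal `Ω_H⁻¹ = {x : x + Ω_H ⊆ H}`. -/
def antiCanIdeal (H : Set ℕ) : Set ℤ :=
  {x : ℤ | ∀ w ∈ canIdeal H, memZ H (x + w)}

/-- The trace of `H`: the sumset `Ω_H + Ω_H⁻¹`. -/
def trace (H : Set ℕ) : Set ℤ :=
  {z : ℤ | ∃ w ∈ canIdeal H, ∃ x ∈ antiCanIdeal H, z = w + x}

/-- The conductor ideal `C_H = {x : x > Fr(H)}` (viewed inside ℤ). -/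
noncomputable def condIdeal (H : Set ℕ) : Set ℤ := {z : ℤ | frob H < z}

/-- The residue of `H`: `|H ∖ tr(H)|`. -/
noncomputable def res (H : Set ℕ) : ℕ :=
  Set.ncard {h : ℕ | h ∈ H ∧ (h : ℤ) ∉ trace H}

/-- The number of gaps `g(H)`. -/
noncomputable def gaps (H : Set ℕ) : ℕ := Set.ncard Hᶜ

/-- The number of non-gaps below the Frobenius number, `n(H)`. -/
noncomputable def nongaps (H : Set ℕ) : ℕ :=
  Set.ncard {x : ℕ | x ∈ H ∧ (x : ℤ) < frob H}

/-- `H` is symmetric if for all `x ∈ ℤ`, `x ∈ H` or `Fr(H) - x ∈ H`. -/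
noncomputable def IsSymmetric (H : Set ℕ) : Prop :=
  ∀ z : ℤ, memZ H z ∨ memZ H (frob H - z)

/-- `H` is nearly Gorenstein if `M = H ∖ {0} ⊆ tr(H)`. -/
def NearlyGorenstein (H : Set ℕ) : Prop :=
  ∀ h ∈ H, h ≠ 0 → (h : ℤ) ∈ trace H

/-- The submonoid of ℕ generated by a set. -/
def genBy (A : Set ℕ) : Set ℕ := (AddSubmonoid.closure A : Set ℕ)

end NumSgp

open NumSgp

/-!
Write `k = e - 1` and `H = ⟨a, a + d, …, a + k d⟩`. The elements of `H` are the numbers `s a + t d`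
with `t ≤ k s`, so by coprimality the smallest element of `H` congruent to `t d` modulo `a`
(for `t < a`) is the Apéry element `w(t) = ⌈t / k⌉ a + t d`. Hence `Fr(H) = w(a - 1) - a`, and `H` is symmetric exactly when
`w(t) + w(a - 1 - t) = w(a - 1)` for all `t < a`, which is a statement about ceilings:
`⌈t / k⌉ + ⌈(a - 1 - t) / k⌉ = ⌈(a - 1) / k⌉`. This holds for all `t` when `k ∣ a - 2`, and fails
at `t = 1` otherwise.
-/

namespace NumSgp

theorem frob_eq_of_forall_lt_memZ {H : Set ℕ} {F : ℤ} (hF : ¬ memZ H F)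
    (h : ∀ z, F < z → memZ H z) : frob H = F := by
  have hub : ∀ z ∈ {z : ℤ | ¬ memZ H z}, z ≤ F := fun z hz => not_lt.1 fun hlt => hz (h z hlt)
  exact le_antisymm (csSup_le ⟨F, hF⟩ hub) (le_csSup ⟨F, hub⟩ hF)

theorem add_le_of_intCast_eq_of_lt {a : ℕ} {z w : ℤ} (h : (z : ZMod a) = w) (hlt : z < w) :
    z + a ≤ w := by
  have := Int.le_of_dvd (sub_pos.2 hlt) ((ZMod.intCast_eq_intCast_iff_dvd_sub z w a).1 h)
  linarith

theorem exists_intCast_eq_mul {a d : ℕ} (ha : 0 < a) (hcop : a.Coprime d) (z : ℤ) :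
    ∃ t < a, (z : ZMod a) = t * d := by
  have : NeZero a := ⟨ha.ne'⟩
  refine ⟨((z : ZMod a) * (d : ZMod a)⁻¹).val, ZMod.val_lt _, ?_⟩
  rw [ZMod.natCast_zmod_val, mul_assoc, mul_comm _ (d : ZMod a),
    ZMod.coe_mul_inv_eq_one d hcop.symm, mul_one]

theorem le_of_natCast_mul_eq {a d t t' : ℕ} (hcop : a.Coprime d) (ht : t < a)
    (h : (t' : ZMod a) * d = t * d) : t ≤ t' := by
  rw [((ZMod.isUnit_iff_coprime d a).2 hcop.symm).mul_left_inj,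
    ZMod.natCast_eq_natCast_iff' t' t a, Nat.mod_eq_of_lt ht] at h
  exact h ▸ Nat.mod_le t' a

theorem mul_ceilDiv_le (k t : ℕ) : k * (t ⌈/⌉ k) ≤ t + k - 1 := by
  rw [Nat.ceilDiv_eq_add_pred_div, mul_comm]
  exact Nat.div_mul_le_self _ _

theorem ceilDiv_add_ceilDiv_le_of_dvd {k t s : ℕ} (hk : 0 < k) (h : k ∣ t + s - 1) :
    t ⌈/⌉ k + s ⌈/⌉ k ≤ (t + s) ⌈/⌉ k := by
  obtain ⟨q, hq⟩ := h
  rcases Nat.eq_zero_or_pos (t + s) with h0 | hpos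
  · obtain ⟨rfl, rfl⟩ : t = 0 ∧ s = 0 := by omega
    simp
  have hsum : t ⌈/⌉ k + s ⌈/⌉ k < q + 2 := by
    refine Nat.lt_of_mul_lt_mul_left (a := k) ?_
    have := mul_ceilDiv_le k t
    have := mul_ceilDiv_le k s
    rw [mul_add, mul_add]
    omega
  have hq1 : q < (t + s) ⌈/⌉ k := by
    rw [← not_le, ceilDiv_le_iff_le_mul hk]
    omega
  omega

theorem succ_ceilDiv_of_not_dvd {k m : ℕ} (hk : 0 < k) (h : ¬ k ∣ m) :
    (m + 1) ⌈/⌉ k = m ⌈/⌉ k := by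
  refine le_antisymm ((ceilDiv_le_iff_le_mul hk).2 ?_) ((gc_mul_ceilDiv hk).monotone_l m.le_succ)
  have hle : m ≤ k * (m ⌈/⌉ k) := le_smul_ceilDiv hk
  have hne : m ≠ k * (m ⌈/⌉ k) := fun heq => h ⟨_, heq⟩
  omega

def arithSeqSgp (k a d : ℕ) : Set ℕ := genBy {x : ℕ | ∃ i < k + 1, x = a + i * d}

/-- For `t < a` and `gcd a d = 1`, the smallest element of `arithSeqSgp k a d` congruent to
`t d` modulo `a`. -/
def apery (k a d t : ℕ) : ℕ := t ⌈/⌉ k * a + t * d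

section ArithSeq

variable {k a d : ℕ}

theorem mem_arithSeqSgp_iff {n : ℕ} :
    n ∈ arithSeqSgp k a d ↔ ∃ s t, t ≤ k * s ∧ n = s * a + t * d := by
  constructor
  · intro hn
    induction hn using AddSubmonoid.closure_induction with
    | mem x hx =>
      obtain ⟨i, hi, rfl⟩ := hx
      exact ⟨1, i, by omega, by ring⟩
    | zero => exact ⟨0, 0, le_rfl, by ring⟩
    | add x y _ _ ihx ihy =>
      obtain ⟨s₁, t₁, h₁, rfl⟩ := ihx
      obtain ⟨s₂, t₂, h₂, rfl⟩ := ihy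
      exact ⟨s₁ + s₂, t₁ + t₂, by rw [mul_add]; omega, by ring⟩
  · rintro ⟨s, t, hts, rfl⟩
    induction s generalizing t with
    | zero =>
      obtain rfl : t = 0 := by omega
      rw [zero_mul, zero_mul, add_zero]
      exact AddSubmonoid.zero_mem _
    | succ s ih =>
      -- peel off the generator `a + i d` with `i = min t k`
      have hgen : a + min t k * d ∈ arithSeqSgp k a d :=
        AddSubmonoid.subset_closure ⟨min t k, by omega, rfl⟩
      have hrest := ih (t - min t k) (by rw [mul_add] at hts; omega)
      have heq : (s + 1) * a + t * d = (a + min t k * d) + (s * a + (t - min t k) * d) := by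
        rw [add_add_add_comm, ← add_mul, Nat.add_sub_cancel' (min_le_left t k)]
        ring
      rw [heq]
      exact AddSubmonoid.add_mem _ hgen hrest

theorem apery_mono (hk : 0 < k) {t t' : ℕ} (h : t ≤ t') : apery k a d t ≤ apery k a d t' :=
  add_le_add (Nat.mul_le_mul_right _ ((gc_mul_ceilDiv hk).monotone_l h))
    (Nat.mul_le_mul_right _ h)

theorem intCast_apery (t : ℕ) : ((apery k a d t : ℤ) : ZMod a) = t * d := by
  simp [apery]

theorem memZ_arithSeqSgp_iff (hk : 0 < k) (hcop : a.Coprime d) {t : ℕ} (ht : t < a) {z : ℤ}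
    (hz : (z : ZMod a) = t * d) : memZ (arithSeqSgp k a d) z ↔ (apery k a d t : ℤ) ≤ z := by
  constructor
  · rintro ⟨n, hn, rfl⟩
    obtain ⟨s, t', hts, rfl⟩ := mem_arithSeqSgp_iff.1 hn
    have htt' : t ≤ t' := le_of_natCast_mul_eq hcop ht (by simpa using hz)
    have hcs : t ⌈/⌉ k ≤ s := (ceilDiv_le_iff_le_mul hk).2 (htt'.trans hts)
    exact_mod_cast add_le_add (Nat.mul_le_mul_right a hcs) (Nat.mul_le_mul_right d htt')
  · intro hle
    obtain ⟨m, hm⟩ := (ZMod.intCast_eq_intCast_iff_dvd_sub _ z a).1 ((intCast_apery t).trans hz.symm)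
    have hm0 : 0 ≤ m := by
      have : (0 : ℤ) < a := by exact_mod_cast ht.pos
      nlinarith
    lift m to ℕ using hm0
    refine ⟨apery k a d t + m * a, mem_arithSeqSgp_iff.2 ⟨t ⌈/⌉ k + m, t, ?_, ?_⟩, ?_⟩
    · rw [mul_add]
      exact le_add_right (le_smul_ceilDiv hk)
    · rw [apery]
      ring
    · push_cast
      linarith

theorem frob_arithSeqSgp (hk : 0 < k) (ha : 0 < a) (hcop : a.Coprime d) :
    frob (arithSeqSgp k a d) = apery k a d (a - 1) - a := by
  have hcast : (((apery k a d (a - 1) - a : ℤ)) : ZMod a) = (a - 1 : ℕ) * d := by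
    rw [Int.cast_sub, intCast_apery]
    push_cast [Nat.cast_sub ha, ZMod.natCast_self]
    ring
  refine frob_eq_of_forall_lt_memZ ?_ fun z hz => ?_
  · rw [memZ_arithSeqSgp_iff hk hcop (by omega) hcast]
    omega
  obtain ⟨t, ht, hzt⟩ := exists_intCast_eq_mul ha hcop z
  rw [memZ_arithSeqSgp_iff hk hcop ht hzt]
  by_contra! hlt
  have hmax : (apery k a d t : ℤ) ≤ apery k a d (a - 1) := by
    exact_mod_cast apery_mono hk (by omega : t ≤ a - 1)
  have := add_le_of_intCast_eq_of_lt (hzt.trans (intCast_apery t).symm) hlt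
  omega

theorem apery_add_apery_le (hk : 0 < k) (hka : k ∣ a - 2) {t : ℕ} (ht : t < a) :
    apery k a d t + apery k a d (a - 1 - t) ≤ apery k a d (a - 1) := by
  have hceil := ceilDiv_add_ceilDiv_le_of_dvd (t := t) (s := a - 1 - t) hk
    (by rwa [show t + (a - 1 - t) - 1 = a - 2 by omega])
  rw [show t + (a - 1 - t) = a - 1 by omega] at hceil
  have hd : t * d + (a - 1 - t) * d = (a - 1) * d := by rw [← add_mul]; congr 1; omega
  unfold apery
  nlinarith

theorem isSymmetric_arithSeqSgp_of_dvd (hk : 0 < k) (ha : 0 < a) (hcop : a.Coprime d)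
    (hka : k ∣ a - 2) : IsSymmetric (arithSeqSgp k a d) := by
  intro z
  rw [frob_arithSeqSgp hk ha hcop]
  by_cases hz : memZ (arithSeqSgp k a d) z
  · exact Or.inl hz
  right
  obtain ⟨t, ht, hzt⟩ := exists_intCast_eq_mul ha hcop z
  rw [memZ_arithSeqSgp_iff hk hcop ht hzt, not_le] at hz
  have hza := add_le_of_intCast_eq_of_lt (hzt.trans (intCast_apery t).symm) hz
  have hcls : (((apery k a d (a - 1) - a - z : ℤ)) : ZMod a) = (a - 1 - t : ℕ) * d := by
    rw [Int.cast_sub, Int.cast_sub, intCast_apery, hzt]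
    push_cast [Nat.cast_sub (show t ≤ a - 1 by omega), Nat.cast_sub ha, ZMod.natCast_self]
    ring
  rw [memZ_arithSeqSgp_iff hk hcop (by omega) hcls]
  have := apery_add_apery_le (d := d) hk hka ht
  omega

-- `d` and `Fr(H) - d = w(a - 2) - a` both lie just below the minimal elements of their classes.
theorem not_isSymmetric_arithSeqSgp (hk : 0 < k) (ha : 2 ≤ a) (hcop : a.Coprime d)
    (hka : ¬ k ∣ a - 2) : ¬ IsSymmetric (arithSeqSgp k a d) := by
  intro hsym
  have hceil : (a - 1) ⌈/⌉ k = (a - 2) ⌈/⌉ k := by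
    rw [show a - 1 = a - 2 + 1 by omega, succ_ceilDiv_of_not_dvd hk hka]
  have hone : 1 ⌈/⌉ k = 1 := by
    rw [Nat.ceilDiv_eq_add_pred_div, Nat.add_sub_cancel_left, Nat.div_self hk]
  have hcls : (((apery k a d (a - 1) - a - d : ℤ)) : ZMod a) = (a - 2 : ℕ) * d := by
    rw [Int.cast_sub, Int.cast_sub, intCast_apery]
    push_cast [Nat.cast_sub (show 1 ≤ a by omega), Nat.cast_sub ha, ZMod.natCast_self]
    ring
  rcases frob_arithSeqSgp (d := d) hk (by omega) hcop ▸ hsym d with h | h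
  · rw [memZ_arithSeqSgp_iff hk hcop (by omega : 1 < a) (by simp)] at h
    unfold apery at h
    rw [hone] at h
    omega
  · rw [memZ_arithSeqSgp_iff hk hcop (by omega) hcls] at h
    have hd : (a - 1) * d = (a - 2) * d + d := by
      rw [show a - 1 = a - 2 + 1 by omega, add_one_mul]
    unfold apery at h
    rw [hceil, hd] at h
    push_cast at h
    omega

theorem isSymmetric_arithSeqSgp_iff (hk : 0 < k) (ha : 2 ≤ a) (hcop : a.Coprime d) :
    IsSymmetric (arithSeqSgp k a d) ↔ a ≡ 2 [MOD k] := by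
  rw [Nat.ModEq.comm, Nat.modEq_iff_dvd' ha]
  exact ⟨not_imp_not.1 (not_isSymmetric_arithSeqSgp hk ha hcop),
    fun hka => isSymmetric_arithSeqSgp_of_dvd hk (by omega) hcop hka⟩

end ArithSeq

end NumSgp

/-- a numerical semigroup generated by an arithmetic sequence
`a, a+d, …, a+(e-1)d` with `gcd(a,d) = 1`, `2 < e ≤ a`, is symmetric iff
`a ≡ 2 (mod e-1)`. -/
theorem stmt_3 (e a d : ℕ) (he : 2 < e) (hcop : Nat.Coprime a d) (hea : e ≤ a)
    (H : Set ℕ) (hH : H = genBy {x : ℕ | ∃ i < e, x = a + i * d}) :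
    IsSymmetric H ↔ a ≡ 2 [MOD e - 1] := by
  obtain ⟨k, rfl⟩ : ∃ k, e = k + 1 := ⟨e - 1, by omega⟩
  subst hH
  rw [Nat.add_sub_cancel]
  exact isSymmetric_arithSeqSgp_iff (by omega) (by omega) hcop
end

section
/- Let e > 2 and let a, d be coprime nonnegative integers with e ≤ a, and let H be the numerical semigroup generated by the arithmetic sequence a, a+d, a+2d, …, a+(e−1)d. Set k = ⌊(a−2)/(e−1)⌋ and τ = a − k(e−1) − 1. Then Fr(H) = ak + d(a−1) and PF(H) = {Fr(H) − i·d : i = 0, 1, …, τ−1}; in particular the type of H equals τ. -/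
open NumSgp

/-!
Since `gcd(a, d) = 1`, every integer is `q a + t d` with `0 ≤ t < a`, and then
`q a + t d ∈ H ↔ t ≤ q (e - 1)`: an element of `H` is a sum of `s` generators, that is
`s a + t' d` with `t' ≤ s (e - 1)`, and reducing `t'` modulo `a` only increases the
coefficient of `a`. Writing `a - 1 = k (e - 1) + τ` with `1 ≤ τ ≤ e - 1`, the largest gap is
`k a + (a - 1) d`, and the pseudo-Frobenius numbers are the gaps `k a + t d` with
`k (e - 1) < t < a`: adding a generator `a + j d` to one of them raises the coefficient of `a`
to `k + 1`, or to `k + 1 + d` when `t + j` wraps around modulo `a`.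
-/

namespace NumSgp

lemma frob_eq {H : Set ℕ} {F : ℤ} (hF : ¬ memZ H F) (habove : ∀ z, F < z → memZ H z) :
    frob H = F :=
  IsGreatest.csSup_eq ⟨hF, fun z hz => not_lt.mp fun hlt => hz (habove z hlt)⟩

lemma memZ_genBy_add {A : Set ℕ} {z : ℤ} {n : ℕ} (hz : memZ (genBy A) z)
    (hn : n ∈ genBy A) : memZ (genBy A) (z + n) := by
  obtain ⟨m, hm, rfl⟩ := hz
  exact ⟨m + n, AddSubmonoid.add_mem _ hm hn, by push_cast; rfl⟩

lemma mem_pseudoFrob_genBy {A : Set ℕ} {f : ℤ} (hf : ¬ memZ (genBy A) f)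
    (hA : ∀ g ∈ A, g ≠ 0 → memZ (genBy A) (f + g)) : f ∈ pseudoFrob (genBy A) := by
  refine ⟨hf, fun m hm => ?_⟩
  induction hm using AddSubmonoid.closure_induction with
  | mem g hg => exact hA g hg
  | zero => exact fun h => (h rfl).elim
  | add x y hx hy ihx ihy =>
    intro hxy
    rcases eq_or_ne x 0 with rfl | hx0
    · simpa using ihy (by simpa using hxy)
    · simpa [add_assoc] using memZ_genBy_add (ihx hx0) hy

lemma exists_eq_mul_add_mul_of_coprime {a d : ℕ} (ha : 0 < a) (hcop : a.Coprime d) (z : ℤ) :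
    ∃ q : ℤ, ∃ t < a, z = q * a + t * d := by
  obtain ⟨u, v, huv⟩ := Nat.isCoprime_iff_coprime.mpr hcop
  have hr := Int.emod_add_mul_ediv (z * v) a
  have hlt := Int.emod_lt_of_pos (z * v) (by omega : (0 : ℤ) < a)
  refine ⟨z * u + z * v / a * d, ((z * v) % a).toNat, by omega, ?_⟩
  rw [Int.toNat_of_nonneg (Int.emod_nonneg _ (by omega))]
  linear_combination (-z) * huv - d * hr

def arithSgp (e a d : ℕ) : Set ℕ := genBy {x | ∃ i < e, x = a + i * d}

section ArithSgp

variable {e a d : ℕ}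

lemma add_mul_mem_arithSgp {j : ℕ} (hj : j < e) : a + j * d ∈ arithSgp e a d :=
  AddSubmonoid.subset_closure ⟨j, hj, rfl⟩

lemma mul_add_mul_mem_arithSgp (he : 0 < e) {s t : ℕ} (h : t ≤ s * (e - 1)) :
    s * a + t * d ∈ arithSgp e a d := by
  induction s generalizing t with
  | zero =>
    obtain rfl : t = 0 := by simpa using h
    rw [zero_mul, zero_mul, add_zero]
    exact (AddSubmonoid.closure _).zero_mem
  | succ s ih =>
    obtain ⟨j, u, rfl, hj, hu⟩ : ∃ j u, t = j + u ∧ j < e ∧ u ≤ s * (e - 1) :=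
      ⟨min t (e - 1), t - min t (e - 1), by omega, by omega, by rw [Nat.succ_mul] at h; omega⟩
    rw [show (s + 1) * a + (j + u) * d = (a + j * d) + (s * a + u * d) by ring]
    exact AddSubmonoid.add_mem _ (add_mul_mem_arithSgp hj) (ih hu)

lemma mem_arithSgp_iff (he : 0 < e) {n : ℕ} :
    n ∈ arithSgp e a d ↔ ∃ s t : ℕ, t ≤ s * (e - 1) ∧ n = s * a + t * d := by
  refine ⟨fun hn => ?_, fun ⟨s, t, h, hn⟩ => hn ▸ mul_add_mul_mem_arithSgp he h⟩
  induction hn using AddSubmonoid.closure_induction with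
  | mem x hx =>
    obtain ⟨i, hi, rfl⟩ := hx
    exact ⟨1, i, by omega, by ring⟩
  | zero => exact ⟨0, 0, by simp, by ring⟩
  | add x y _ _ ihx ihy =>
    obtain ⟨s₁, t₁, h₁, rfl⟩ := ihx
    obtain ⟨s₂, t₂, h₂, rfl⟩ := ihy
    exact ⟨s₁ + s₂, t₁ + t₂, by rw [Nat.add_mul]; omega, by ring⟩

lemma memZ_arithSgp_of_le (he : 2 ≤ e) {q : ℤ} {t : ℕ} (h : (t : ℤ) ≤ q * (e - 1)) :
    memZ (arithSgp e a d) (q * a + t * d) := by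
  have he' : (1 : ℤ) ≤ e - 1 := by omega
  lift q to ℕ using by nlinarith
  refine ⟨q * a + t * d, mul_add_mul_mem_arithSgp (by omega) ?_, by push_cast; ring⟩
  zify [show 1 ≤ e by omega]
  exact h

lemma memZ_arithSgp_iff (he : 2 ≤ e) (hcop : a.Coprime d) {q : ℤ} {t : ℕ} (ht : t < a) :
    memZ (arithSgp e a d) (q * a + t * d) ↔ (t : ℤ) ≤ q * (e - 1) := by
  refine ⟨fun ⟨n, hn, hnz⟩ => ?_, memZ_arithSgp_of_le he⟩
  obtain ⟨s, t', ht', rfl⟩ := (mem_arithSgp_iff (by omega)).mp hn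
  push_cast at hnz
  have hdvd : (a : ℤ) ∣ (t' - t) * d := ⟨q - s, by linear_combination hnz⟩
  obtain ⟨m, hm⟩ := (Nat.isCoprime_iff_coprime.mpr hcop).dvd_of_dvd_mul_right hdvd
  have hm0 : 0 ≤ m := by nlinarith
  have hq : q = s + m * d := by
    refine mul_right_cancel₀ (show (a : ℤ) ≠ 0 by omega) ?_
    linear_combination -hnz + d * hm
  have hts : (t' : ℤ) ≤ s * (e - 1) := by
    zify [show 1 ≤ e by omega] at ht'
    exact ht'
  have : 0 ≤ m * d * ((e : ℤ) - 1) := by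
    have : (0 : ℤ) ≤ e - 1 := by omega
    positivity
  rw [hq]
  nlinarith

variable {k τ : ℕ}

lemma frob_arithSgp (he : 2 ≤ e) (hcop : a.Coprime d) (hak : a = k * (e - 1) + τ + 1)
    (hτ0 : 0 < τ) (hτe : τ < e) : frob (arithSgp e a d) = a * k + d * (a - 1) := by
  have hakZ : (a : ℤ) = k * (e - 1) + τ + 1 := by
    rw [hak]; push_cast [show 1 ≤ e by omega]; ring
  have hF : (a : ℤ) * k + d * (a - 1) = k * a + ((a - 1 : ℕ) : ℤ) * d := by
    push_cast [show 1 ≤ a by omega]; ring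
  refine frob_eq ?_ fun z hz => ?_
  · rw [hF, memZ_arithSgp_iff he hcop (by omega)]
    push_cast [show 1 ≤ a by omega]
    linarith
  · obtain ⟨q, t, hta, rfl⟩ := exists_eq_mul_add_mul_of_coprime (by omega) hcop z
    have hkq : k + 1 ≤ q := by
      by_contra! hqk
      have : (t : ℤ) * d ≤ (a - 1) * d := by gcongr; omega
      nlinarith
    apply memZ_arithSgp_of_le he
    have : (τ : ℤ) ≤ e - 1 := by omega
    nlinarith

lemma mul_add_mul_mem_pseudoFrob_arithSgp (he : 2 ≤ e) (hcop : a.Coprime d)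
    (hak : a = k * (e - 1) + τ + 1) (hτe : τ < e) {t : ℕ} (hkt : k * (e - 1) < t)
    (hta : t < a) :
    (k : ℤ) * a + t * d ∈ pseudoFrob (arithSgp e a d) := by
  have he' : (1 : ℤ) ≤ e - 1 := by omega
  have hkt' : (k : ℤ) * (e - 1) < t := by zify [show 1 ≤ e by omega] at hkt; exact hkt
  have hak' : (a : ℤ) ≤ (k + 1) * (e - 1) + 1 := by
    rw [hak]; push_cast [show 1 ≤ e by omega]; nlinarith
  refine mem_pseudoFrob_genBy (fun h => ?_) ?_
  · exact absurd ((memZ_arithSgp_iff he hcop hta).mp h) (by linarith)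
  rintro _ ⟨j, hj, rfl⟩ -
  rcases lt_or_ge (t + j) a with htj | htj
  · rw [show (k : ℤ) * a + t * d + ((a + j * d : ℕ) : ℤ)
        = (k + 1) * a + ((t + j : ℕ) : ℤ) * d by push_cast; ring]
    exact memZ_arithSgp_of_le he (by push_cast; nlinarith)
  · -- the multiple of `d` wraps around modulo `a`
    rw [show (k : ℤ) * a + t * d + ((a + j * d : ℕ) : ℤ)
        = (k + 1 + d) * a + ((t + j - a : ℕ) : ℤ) * d by push_cast [htj]; ring]
    have : ((t + j - a : ℕ) : ℤ) ≤ e - 1 := by omega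
    exact memZ_arithSgp_of_le he (by nlinarith)

lemma exists_eq_of_mem_pseudoFrob_arithSgp (he : 2 ≤ e) (hcop : a.Coprime d)
    (hak : a = k * (e - 1) + τ + 1) (hτ0 : 0 < τ) (hτe : τ < e) {f : ℤ}
    (hf : f ∈ pseudoFrob (arithSgp e a d)) :
    ∃ t : ℕ, k * (e - 1) < t ∧ t < a ∧ f = k * a + t * d := by
  obtain ⟨q, t, hta, rfl⟩ := exists_eq_mul_add_mul_of_coprime (by omega) hcop f
  have hgen : ∀ j < e, t + j < a → (t + j : ℤ) ≤ (q + 1) * (e - 1) := fun j hj htj => by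
    have := hf.2 _ (add_mul_mem_arithSgp hj) (by omega)
    rw [show q * a + t * d + ((a + j * d : ℕ) : ℤ) = (q + 1) * a + ((t + j : ℕ) : ℤ) * d by
      push_cast; ring, memZ_arithSgp_iff he hcop htj] at this
    exact_mod_cast this
  have hqt : q * (e - 1) < t := by
    have := hf.1
    rwa [memZ_arithSgp_iff he hcop hta, not_le] at this
  -- so that `a - 1 - t < e` indexes a generator
  have hte : a ≤ t + (e - 1) := by
    by_contra!
    have := hgen (e - 1) (by omega) this
    push_cast [show 1 ≤ e by omega] at this
    linarith
  have hqa : (a - 1 : ℤ) ≤ (q + 1) * (e - 1) := by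
    have := hgen (a - 1 - t) (by omega) (by omega)
    push_cast [show t ≤ a - 1 by omega, show 1 ≤ a by omega] at this
    linarith
  have hakZ : (a : ℤ) = k * (e - 1) + τ + 1 := by
    rw [hak]; push_cast [show 1 ≤ e by omega]; ring
  have hqk : q < k + 1 := by
    have : q * (e - 1) < (k + 1) * (e - 1) := by linarith
    exact lt_of_mul_lt_mul_right this (by omega)
  have hkq : k < q + 1 := by
    have : k * (e - 1) < (q + 1) * (e - 1) := by linarith
    exact lt_of_mul_lt_mul_right this (by omega)
  obtain rfl : q = k := by omega
  refine ⟨t, ?_, hta, rfl⟩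
  zify [show 1 ≤ e by omega]
  exact hqt

lemma pseudoFrob_arithSgp (he : 2 ≤ e) (hcop : a.Coprime d) (hak : a = k * (e - 1) + τ + 1)
    (hτ0 : 0 < τ) (hτe : τ < e) :
    pseudoFrob (arithSgp e a d) = {z : ℤ | ∃ i < τ, z = a * k + d * (a - 1) - i * d} := by
  ext f
  constructor
  · intro hf
    obtain ⟨t, hkt, hta, rfl⟩ := exists_eq_of_mem_pseudoFrob_arithSgp he hcop hak hτ0 hτe hf
    refine ⟨a - 1 - t, by omega, ?_⟩
    push_cast [show t ≤ a - 1 by omega, show 1 ≤ a by omega]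
    ring
  · rintro ⟨i, hi, rfl⟩
    convert mul_add_mul_mem_pseudoFrob_arithSgp he hcop hak hτe (t := a - 1 - i)
      (by omega) (by omega) using 1
    push_cast [show i ≤ a - 1 by omega, show 1 ≤ a by omega]
    ring

end ArithSgp

lemma ncard_setOf_exists_lt_eq_sub_mul (F : ℤ) {d : ℕ} (hd : d ≠ 0) (τ : ℕ) :
    {z : ℤ | ∃ i < τ, z = F - i * d}.ncard = τ := by
  have hinj : Function.Injective fun i : ℕ => F - i * d := fun i j hij => by
    simpa [hd] using hij
  convert (Set.ncard_image_of_injective (Set.Iio τ) hinj).trans (Set.ncard_Iio_nat τ)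
  ext z
  simp [eq_comm]

end NumSgp

/-- for `H` generated by the arithmetic sequence `a, a+d, …, a+(e-1)d`
with `gcd(a,d) = 1`, `2 < e ≤ a`, `k = ⌊(a-2)/(e-1)⌋` and `τ = a - k(e-1) - 1`, one has
`Fr(H) = ak + d(a-1)`, `PF(H) = {Fr(H) - i·d : 0 ≤ i ≤ τ-1}` and `type(H) = τ`. -/
theorem stmt_5 (e a d : ℕ) (he : 2 < e) (hcop : Nat.Coprime a d) (hea : e ≤ a)
    (H : Set ℕ) (hH : H = genBy {x : ℕ | ∃ i < e, x = a + i * d})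
    (k τ : ℕ) (hk : k = (a - 2) / (e - 1)) (hτ : τ = a - k * (e - 1) - 1) :
    frob H = (a : ℤ) * k + d * (a - 1) ∧
    pseudoFrob H = {z : ℤ | ∃ i < τ, z = frob H - (i : ℤ) * d} ∧
    (pseudoFrob H).ncard = τ := by
  obtain rfl : H = arithSgp e a d := hH
  have hd : d ≠ 0 := by
    rintro rfl
    rw [Nat.coprime_zero_right] at hcop
    omega
  have hdiv := Nat.div_add_mod (a - 2) (e - 1)
  have hmod := Nat.mod_lt (a - 2) (show 0 < e - 1 by omega)
  rw [← hk, mul_comm] at hdiv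
  have hak : a = k * (e - 1) + τ + 1 := by omega
  have hfrob := frob_arithSgp he.le hcop hak (by omega) (by omega)
  have hPF := pseudoFrob_arithSgp he.le hcop hak (by omega) (by omega)
  rw [hfrob, hPF]
  exact ⟨rfl, rfl, ncard_setOf_exists_lt_eq_sub_mul _ hd τ⟩
end
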